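/- arXiv:2510.04337 — 2 statements merged into one kernel-verified Lean document; each statement's English description precedes it below -/
import Mathlib

section
/- Let A₁ and A₂ be 2×2 real orthogonal matrices with det A₁ = det A₂ = 1, and let p₁, p₂ ∈ ℝ². Define the rotations h_i : ℝ² → ℝ² by h_i(v) = A_i(v − p_i) + p_i for i = 1, 2. Then for every v ∈ ℝ², (h₂⁻¹ ∘ h₁⁻¹ ∘ h₂ ∘ h₁)(v) = v + (I₂ − A₂⁻¹)(I₂ − A₁⁻¹)(p₂ − p₁), where I₂ is the 2×2 identity matrix. Moreover, if A₁ ≠ I₂, A₂ ≠ I₂, and p₁ ≠ p₂, then the translation vector (I₂ − A₂⁻¹)(I₂ − A₁⁻¹)(p₂ − p₁) is nonzero. -/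
/-!
Plane rotations commute, so the linear part `A₂⁻¹ A₁⁻¹ A₂ A₁` of the commutator of the two
rotations is the identity and the commutator is a translation. A rotation `A ≠ 1` has no fixed
vector, since `det (1 - A) = 2 (1 - cos θ) ≠ 0`; hence both `1 - A₁⁻¹` and `1 - A₂⁻¹` are
injective and the translation vector vanishes only when `p₁ = p₂`.
-/

noncomputable section

open Matrix

theorem commutator_affine_mulVec {n R : Type*} [Fintype n] [DecidableEq n] [CommRing R]
    {A B : Matrix n n R} (hA : IsUnit A) (hB : IsUnit B) (hAB : Commute A B) (p q v : n → R) :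
    B⁻¹ *ᵥ (A⁻¹ *ᵥ (B *ᵥ (A *ᵥ (v - p) + p - q) + q - p) + p - q) + q =
      v + (1 - B⁻¹) *ᵥ ((1 - A⁻¹) *ᵥ (q - p)) := by
  obtain ⟨u, rfl⟩ := hA
  obtain ⟨w, rfl⟩ := hB
  have hcomm := hAB.units_inv_left
  simp only [← coe_units_inv, mulVec_add, mulVec_sub, mulVec_mulVec, sub_mulVec, one_mulVec,
    sub_mul, one_mul, hcomm.eq, hcomm.left_comm, Units.inv_mul_cancel_left, Units.inv_mul]
  abel

theorem mulVec_ne_zero_of_det_ne_zero {n K : Type*} [Fintype n] [DecidableEq n] [Field K]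
    {M : Matrix n n K} (hM : M.det ≠ 0) {x : n → K} (hx : x ≠ 0) : M *ᵥ x ≠ 0 :=
  fun h => hM (exists_mulVec_eq_zero_iff.mp ⟨x, hx, h⟩)

section SpecialOrthogonalFinTwo

variable {R : Type*} [CommRing R]

theorem exists_eq_rotation_of_transpose_mul_self_eq_one {A : Matrix (Fin 2) (Fin 2) R}
    (ho : Aᵀ * A = 1) (hd : A.det = 1) :
    ∃ a b : R, a ^ 2 + b ^ 2 = 1 ∧ A = !![a, -b; b, a] := by
  have e00 := congrFun (congrFun ho 0) 0
  have e01 := congrFun (congrFun ho 0) 1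
  simp only [mul_apply, Fin.sum_univ_two, transpose_apply, one_apply_eq,
    one_apply_ne Fin.zero_ne_one] at e00 e01
  rw [det_fin_two] at hd
  have h11 : A 1 1 = A 0 0 := by
    linear_combination (-(A 1 1)) * e00 + (A 1 0) * e01 + (A 0 0) * hd
  have h01 : A 0 1 = -A 1 0 := by
    linear_combination (-(A 0 1)) * e00 + (A 0 0) * e01 - (A 1 0) * hd
  exact ⟨A 0 0, A 1 0, by linear_combination e00, (eta_fin_two A).trans (by rw [h11, h01])⟩

theorem commute_of_transpose_mul_self_eq_one {A B : Matrix (Fin 2) (Fin 2) R}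
    (hoA : Aᵀ * A = 1) (hdA : A.det = 1) (hoB : Bᵀ * B = 1) (hdB : B.det = 1) :
    Commute A B := by
  obtain ⟨a, b, -, rfl⟩ := exists_eq_rotation_of_transpose_mul_self_eq_one hoA hdA
  obtain ⟨c, d, -, rfl⟩ := exists_eq_rotation_of_transpose_mul_self_eq_one hoB hdB
  rw [Commute, SemiconjBy, mul_fin_two, mul_fin_two]
  ext i j
  fin_cases i <;> fin_cases j <;>
    simp only [of_apply, cons_val', cons_val_zero, cons_val_one, empty_val', cons_val_fin_one,
      Fin.zero_eta, Fin.mk_one] <;> ring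

end SpecialOrthogonalFinTwo

theorem det_one_sub_ne_zero_of_transpose_mul_self_eq_one {A : Matrix (Fin 2) (Fin 2) ℝ}
    (ho : Aᵀ * A = 1) (hd : A.det = 1) (hA : A ≠ 1) : (1 - A).det ≠ 0 := by
  obtain ⟨a, b, hab, rfl⟩ := exists_eq_rotation_of_transpose_mul_self_eq_one ho hd
  have hdet : (1 - !![a, -b; b, a]).det = 2 * (1 - a) := by
    simp only [det_fin_two, Matrix.sub_apply, one_apply, of_apply, cons_val', cons_val_zero,
      cons_val_fin_one, cons_val_one, if_pos, zero_ne_one, one_ne_zero, if_false]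
    linear_combination hab
  rw [hdet]
  intro h
  have ha : a = 1 := by linarith
  have hb : b = 0 := by
    subst ha
    exact pow_eq_zero_iff two_ne_zero |>.mp (by linarith)
  apply hA
  rw [ha, hb, neg_zero, one_fin_two]

theorem det_one_sub_inv_ne_zero_of_transpose_mul_self_eq_one {A : Matrix (Fin 2) (Fin 2) ℝ}
    (ho : Aᵀ * A = 1) (hd : A.det = 1) (hA : A ≠ 1) : (1 - A⁻¹).det ≠ 0 := by
  rw [inv_eq_left_inv ho]
  refine det_one_sub_ne_zero_of_transpose_mul_self_eq_one ?_ (by rwa [det_transpose]) ?_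
  · rw [transpose_transpose]
    exact mul_eq_one_comm.mp ho
  · rwa [Ne, transpose_eq_one]

theorem stmt14 (A₁ A₂ : Matrix (Fin 2) (Fin 2) ℝ)
    (h₁o : A₁ᵀ * A₁ = 1) (h₂o : A₂ᵀ * A₂ = 1)
    (h₁d : A₁.det = 1) (h₂d : A₂.det = 1)
    (p₁ p₂ : Fin 2 → ℝ)
    (h₁ h₂ g₁ g₂ : (Fin 2 → ℝ) → Fin 2 → ℝ)
    (hh₁ : ∀ v, h₁ v = A₁.mulVec (v - p₁) + p₁)
    (hh₂ : ∀ v, h₂ v = A₂.mulVec (v - p₂) + p₂)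
    (hg₁ : ∀ v, g₁ v = A₁⁻¹.mulVec (v - p₁) + p₁)
    (hg₂ : ∀ v, g₂ v = A₂⁻¹.mulVec (v - p₂) + p₂) :
    (∀ v, (g₂ ∘ g₁ ∘ h₂ ∘ h₁) v =
        v + (1 - A₂⁻¹).mulVec ((1 - A₁⁻¹).mulVec (p₂ - p₁))) ∧
      (A₁ ≠ 1 → A₂ ≠ 1 → p₁ ≠ p₂ →
        (1 - A₂⁻¹).mulVec ((1 - A₁⁻¹).mulVec (p₂ - p₁)) ≠ 0) := by
  refine ⟨fun v => ?_, fun hA₁ hA₂ hp => ?_⟩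
  · simp only [Function.comp_apply, hh₁, hh₂, hg₁, hg₂]
    exact commutator_affine_mulVec ((isUnit_iff_isUnit_det A₁).mpr (h₁d ▸ isUnit_one))
      ((isUnit_iff_isUnit_det A₂).mpr (h₂d ▸ isUnit_one))
      (commute_of_transpose_mul_self_eq_one h₁o h₁d h₂o h₂d) p₁ p₂ v
  · exact mulVec_ne_zero_of_det_ne_zero
      (det_one_sub_inv_ne_zero_of_transpose_mul_self_eq_one h₂o h₂d hA₂)
      (mulVec_ne_zero_of_det_ne_zero
        (det_one_sub_inv_ne_zero_of_transpose_mul_self_eq_one h₁o h₁d hA₁)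
        (sub_ne_zero.mpr hp.symm))
end
end

section
/- Let a, b, c, d, w ∈ ℝ satisfy w² ≠ 1, a² + b² ≠ c² + d², and (a−1)² + b² ≠ (c−w)² + d². Then there exists a nonzero real polynomial F in two variables of total degree at most 2 such that: for all x₁, y₁, x₂, y₂ ∈ ℝ satisfying x₁² + y₁² = x₂² + y₂², (x₁ − 1)² + y₁² = (x₂ − w)² + y₂², and (x₁ − a)² + (y₁ − b)² = (x₂ − c)² + (y₂ − d)², one has F(x₂, y₂) = 0. -/
/-!
Subtracting the first equation from the other two makes them linear in the unknowns of the first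
frame: `x₁ = w x₂ + (1 - w²)/2` and `b y₁ = (c - a w) x₂ + d y₂ + m` for a constant `m`.
Substituting both into `b² (x₁² + y₁²) = b² (x₂² + y₂²)` leaves a quadratic equation in `(x₂, y₂)`.
If that quadratic vanished identically, its constant term `(b (1 - w²)/2)² + m²` would force `b = 0`
(as `w² ≠ 1`) and `m = 0`; the remaining coefficients then give `d = 0`, `c = a w` and
`a (a - 1) = 0`, contradicting `a² + b² ≠ c² + d²` if `a = 0` and
`(a - 1)² + b² ≠ (c - w)² + d²` if `a = 1`.
-/

open MvPolynomial

lemma totalDegree_sq_le_two {σ R : Type*} [CommSemiring R] {p : MvPolynomial σ R}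
    (hp : p.totalDegree ≤ 1) : (p ^ 2).totalDegree ≤ 2 :=
  (totalDegree_pow p 2).trans (by omega)

section AffineForm

variable {R : Type*} [CommSemiring R]

noncomputable def affineForm (u v k : R) : MvPolynomial (Fin 2) R := C u * X 0 + C v * X 1 + C k

@[simp]
lemma eval_affineForm (u v k x y : R) :
    eval ![x, y] (affineForm u v k) = u * x + v * y + k := by
  simp [affineForm]

lemma totalDegree_affineForm_le (u v k : R) : (affineForm u v k).totalDegree ≤ 1 := by
  have hX (r : R) (i : Fin 2) : (C r * X i : MvPolynomial (Fin 2) R).totalDegree ≤ 1 := by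
    rw [C_mul_X_eq_monomial]
    exact (totalDegree_monomial_le _ _).trans (by simp)
  refine (totalDegree_add _ _).trans (max_le ?_ (by simp [totalDegree_C]))
  exact (totalDegree_add _ _).trans (max_le (hX u 0) (hX v 1))

end AffineForm

noncomputable def conic (a b c d w : ℝ) : MvPolynomial (Fin 2) ℝ :=
  C (b ^ 2) * (affineForm w 0 ((1 - w ^ 2) / 2) ^ 2 - affineForm 1 0 0 ^ 2 - affineForm 0 1 0 ^ 2)
    + affineForm (c - a * w) d ((a ^ 2 + b ^ 2 - c ^ 2 - d ^ 2) / 2 - a * ((1 - w ^ 2) / 2)) ^ 2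

lemma totalDegree_conic_le (a b c d w : ℝ) : (conic a b c d w).totalDegree ≤ 2 := by
  have hsq (u v k : ℝ) := totalDegree_sq_le_two (totalDegree_affineForm_le u v k)
  refine (totalDegree_add _ _).trans (max_le ?_ (hsq _ _ _))
  refine (totalDegree_mul _ _).trans ?_
  rw [totalDegree_C, zero_add]
  refine (totalDegree_sub _ _).trans (max_le ?_ (hsq _ _ _))
  exact (totalDegree_sub _ _).trans (max_le (hsq _ _ _) (hsq _ _ _))

lemma eval_conic (a b c d w x y : ℝ) :
    eval ![x, y] (conic a b c d w) =
      b ^ 2 * ((w * x + (1 - w ^ 2) / 2) ^ 2 - x ^ 2 - y ^ 2)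
        + ((c - a * w) * x + d * y
          + ((a ^ 2 + b ^ 2 - c ^ 2 - d ^ 2) / 2 - a * ((1 - w ^ 2) / 2))) ^ 2 := by
  simp [conic]

lemma eval_conic_eq_zero {a b c d w x₁ y₁ x₂ y₂ : ℝ}
    (h₁ : x₁ ^ 2 + y₁ ^ 2 = x₂ ^ 2 + y₂ ^ 2)
    (h₂ : (x₁ - 1) ^ 2 + y₁ ^ 2 = (x₂ - w) ^ 2 + y₂ ^ 2)
    (h₃ : (x₁ - a) ^ 2 + (y₁ - b) ^ 2 = (x₂ - c) ^ 2 + (y₂ - d) ^ 2) :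
    eval ![x₂, y₂] (conic a b c d w) = 0 := by
  have hx : x₁ = w * x₂ + (1 - w ^ 2) / 2 := by linear_combination (h₁ - h₂) / 2
  have hy : b * y₁ = (c - a * w) * x₂ + d * y₂
      + ((a ^ 2 + b ^ 2 - c ^ 2 - d ^ 2) / 2 - a * ((1 - w ^ 2) / 2)) := by
    linear_combination (h₁ - h₃) / 2 - a * hx
  rw [eval_conic, ← hx, ← hy]
  linear_combination b ^ 2 * h₁

lemma conic_ne_zero {a b c d w : ℝ} (hw : w ^ 2 ≠ 1)
    (h1 : a ^ 2 + b ^ 2 ≠ c ^ 2 + d ^ 2)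
    (h2 : (a - 1) ^ 2 + b ^ 2 ≠ (c - w) ^ 2 + d ^ 2) : conic a b c d w ≠ 0 := by
  intro hF
  have hev (x y : ℝ) := (eval_conic a b c d w x y).symm.trans (by rw [hF, map_zero])
  set s := (1 - w ^ 2) / 2 with hs_def
  set m := (a ^ 2 + b ^ 2 - c ^ 2 - d ^ 2) / 2 - a * s with hm_def
  have hs : s ≠ 0 := by intro h; apply hw; linarith
  obtain ⟨hbs, hm⟩ : (b * s) ^ 2 = 0 ∧ m ^ 2 = 0 :=
    (add_eq_zero_iff_of_nonneg (sq_nonneg _) (sq_nonneg _)).1 (by linear_combination hev 0 0)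
  have hb : b = 0 := (mul_eq_zero.1 (pow_eq_zero_iff two_ne_zero |>.1 hbs)).resolve_right hs
  rw [pow_eq_zero_iff two_ne_zero] at hm
  rw [hb, hm] at hev
  have hc : c = a * w := by simpa [sub_eq_zero] using hev 1 0
  have hd : d = 0 := by simpa using hev 0 1
  have ha : a * (a - 1) * s = 0 := by rw [← hm, hm_def, hb, hc, hd, hs_def]; ring
  rcases mul_eq_zero.1 ((mul_eq_zero.1 ha).resolve_right hs) with ha | ha
  · exact h1 (by rw [hb, hc, hd, ha]; ring)
  · exact h2 (by rw [hb, hc, hd, sub_eq_zero.1 ha]; ring)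

theorem stmt18 (a b c d w : ℝ) (hw : w ^ 2 ≠ 1)
    (h1 : a ^ 2 + b ^ 2 ≠ c ^ 2 + d ^ 2)
    (h2 : (a - 1) ^ 2 + b ^ 2 ≠ (c - w) ^ 2 + d ^ 2) :
    ∃ F : MvPolynomial (Fin 2) ℝ, F ≠ 0 ∧ F.totalDegree ≤ 2 ∧
      ∀ x₁ y₁ x₂ y₂ : ℝ,
        x₁ ^ 2 + y₁ ^ 2 = x₂ ^ 2 + y₂ ^ 2 →
        (x₁ - 1) ^ 2 + y₁ ^ 2 = (x₂ - w) ^ 2 + y₂ ^ 2 →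
        (x₁ - a) ^ 2 + (y₁ - b) ^ 2 = (x₂ - c) ^ 2 + (y₂ - d) ^ 2 →
        MvPolynomial.eval ![x₂, y₂] F = 0 :=
  ⟨conic a b c d w, conic_ne_zero hw h1 h2, totalDegree_conic_le a b c d w,
    fun _ _ _ _ => eval_conic_eq_zero⟩
end
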